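/- arXiv:1203.4866 — 3 statements merged into one kernel-verified Lean document; each statement's English description precedes it below -/
import Mathlib

section
/- Let s : [0,T] → ℝ be in W^{2,2}[0,T], let n ∈ ℕ, τ = T/n, t_k = kτ, and s_k = s(t_k). Then the discrete second differences satisfy ∑_{k=1}^{n-1} τ ((s_{k+1} - 2 s_k + s_{k-1})/τ²)² ≤ ∫_0^T |s''(t)|² dt. -/
open MeasureTheory intervalIntegral

/-- Cauchy–Schwarz for interval integrals: `(∫ f)² ≤ (b-a) ∫ f²`. -/
lemma cs_interval (a b : ℝ) (hab : a < b) (f : ℝ → ℝ)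
    (hf : IntervalIntegrable f volume a b)
    (hf2 : IntervalIntegrable (fun x => (f x)^2) volume a b) :
    (∫ x in a..b, f x)^2 ≤ (b - a) * ∫ x in a..b, (f x)^2 := by
  set I := ∫ x in a..b, f x with hI
  set J := ∫ x in a..b, (f x)^2 with hJ
  have hba : (0:ℝ) < b - a := by linarith
  set c : ℝ := I / (b - a) with hc
  have h0 : 0 ≤ ∫ x in a..b, (f x - c)^2 :=
    intervalIntegral.integral_nonneg hab.le (fun u _ => sq_nonneg _)
  have heq : ∫ x in a..b, (f x - c)^2 = J - 2*c*I + (b-a)*c^2 := by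
    have hrw : ∀ x, (f x - c)^2 = ((f x)^2 - (2*c) * f x) + c^2 := fun x => by ring
    simp_rw [hrw]
    rw [intervalIntegral.integral_add (hf2.sub (hf.const_mul _)) intervalIntegrable_const,
        intervalIntegral.integral_sub hf2 (hf.const_mul _),
        intervalIntegral.integral_const_mul, intervalIntegral.integral_const]
    simp only [smul_eq_mul]
    try ring
  rw [heq] at h0
  have hcb : c * (b - a) = I := by rw [hc]; exact div_mul_cancel₀ I hba.ne'
  nlinarith [sq_nonneg c, sq_nonneg (I - c*(b-a))]

set_option maxHeartbeats 4000000 in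
/-- For `s ∈ W^{2,2}[0,T]`, the discrete second differences on the uniform
grid `t_k = k·τ`, `τ = T/n`, satisfy
`∑_{k=1}^{n-1} τ ((s_{k+1} - 2 s_k + s_{k-1})/τ²)² ≤ ∫_0^T |s''(t)|² dt`. -/
theorem discrete_second_difference_bound
    (T : ℝ) (hT : 0 < T) (n : ℕ) (hn : 2 ≤ n) (τ : ℝ) (hτ : τ = T / n)
    (s s' s'' : ℝ → ℝ)
    (hs' : ∀ t ∈ Set.Icc (0:ℝ) T, HasDerivAt s (s' t) t)
    (hs'' : ∀ t ∈ Set.Icc (0:ℝ) T, HasDerivAt s' (s'' t) t)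
    (hint : IntervalIntegrable (fun t => (s'' t)^2) volume 0 T) :
    ∑ k ∈ Finset.Icc 1 (n-1),
        τ * ((s ((k+1) * τ) - 2 * s (k * τ) + s ((k-1) * τ)) / τ^2)^2
      ≤ ∫ t in (0:ℝ)..T, (s'' t)^2 := by
  have hn0 : (0:ℝ) < n := by positivity
  have hτ0 : 0 < τ := by rw [hτ]; positivity
  have hTn : T = n * τ := by rw [hτ]; field_simp
  -- continuity of s and s'
  have hcontS' : ContinuousOn s' (Set.Icc 0 T) :=
    fun t ht => ((hs'' t ht).continuousAt).continuousWithinAt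
  -- integrability of s''^2 on subintervals
  have hsq : ∀ a b : ℝ, 0 ≤ a → b ≤ T → a ≤ b →
      IntervalIntegrable (fun t => (s'' t)^2) volume a b := by
    intro a b h1 h2 h3
    refine hint.mono_set ?_
    rw [Set.uIcc_of_le h3, Set.uIcc_of_le hT.le]
    exact Set.Icc_subset_Icc h1 h2
  -- integrability of s'' on subintervals
  have hs''i : ∀ a b : ℝ, 0 ≤ a → b ≤ T → a ≤ b →
      IntervalIntegrable s'' volume a b := by
    intro a b h1 h2 h3
    have hg : IntervalIntegrable (fun t => (1 + (s'' t)^2)/2) volume a b :=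
      (intervalIntegrable_const.add (hsq a b h1 h2 h3)).div_const 2
    refine hg.mono_fun' ?_ ?_
    · refine (measurable_deriv s').aestronglyMeasurable.congr ?_
      rw [Set.uIoc_of_le h3]
      filter_upwards [ae_restrict_mem measurableSet_Ioc] with x hx
      exact ((hs'' x ⟨h1.trans hx.1.le, hx.2.trans h2⟩).deriv)
    · filter_upwards with x
      simp only [Real.norm_eq_abs]
      nlinarith [sq_nonneg (|s'' x| - 1), sq_abs (s'' x), abs_nonneg (s'' x)]
  -- FTC for s
  have ftc1 : ∀ a b : ℝ, 0 ≤ a → b ≤ T → a ≤ b →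
      ∫ t in a..b, s' t = s b - s a := by
    intro a b h1 h2 h3
    have hsub : Set.uIcc a b ⊆ Set.Icc 0 T := by
      rw [Set.uIcc_of_le h3]; exact Set.Icc_subset_Icc h1 h2
    exact integral_eq_sub_of_hasDerivAt (fun t ht => hs' t (hsub ht))
      ((hcontS'.mono hsub).intervalIntegrable)
  -- FTC for s'
  have ftc2 : ∀ a b : ℝ, 0 ≤ a → b ≤ T → a ≤ b →
      ∫ t in a..b, s'' t = s' b - s' a := by
    intro a b h1 h2 h3
    have hsub : Set.uIcc a b ⊆ Set.Icc 0 T := by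
      rw [Set.uIcc_of_le h3]; exact Set.Icc_subset_Icc h1 h2
    exact integral_eq_sub_of_hasDerivAt (fun t ht => hs'' t (hsub ht)) (hs''i a b h1 h2 h3)
  -- the primitive of s''^2 is continuous
  set F : ℝ → ℝ := fun x => ∫ t in (0:ℝ)..x, (s'' t)^2 with hF
  have hFc : ContinuousOn F (Set.Icc 0 T) := by
    have := continuousOn_primitive_interval' (a := 0) hint Set.left_mem_uIcc
    rwa [Set.uIcc_of_le hT.le] at this
  -- H a u = ∫_{a+u}^{a+τ+u} s''²  and its integrability in u
  have hHrepr : ∀ a u : ℝ, 0 ≤ a → 0 ≤ u → a + τ + u ≤ T →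
      (∫ t in (a+u)..(a+τ+u), (s'' t)^2) = F (a+τ+u) - F (a+u) := by
    intro a u h1 h2 h3
    have e1 : (0:ℝ) ≤ a + u := by linarith
    have e2 : a + u ≤ a + τ + u := by linarith
    rw [hF]
    rw [← intervalIntegral.integral_interval_sub_left
      (hsq 0 (a+τ+u) le_rfl h3 (by linarith)) (hsq 0 (a+u) le_rfl (by linarith) e1)]
  have hHint : ∀ a : ℝ, 0 ≤ a → a + 2*τ ≤ T →
      IntervalIntegrable (fun u => ∫ t in (a+u)..(a+τ+u), (s'' t)^2) volume 0 τ := by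
    intro a h1 h2
    have hcont : ContinuousOn (fun u => F (a+τ+u) - F (a+u)) (Set.uIcc 0 τ) := by
      rw [Set.uIcc_of_le hτ0.le]
      have m1 : Set.MapsTo (fun u => a+τ+u) (Set.Icc 0 τ) (Set.Icc 0 T) := by
        intro u hu; simp only [Set.mem_Icc] at hu ⊢; exact ⟨by linarith [hu.1, hu.2, hτ0.le], by linarith [hu.1, hu.2, hτ0.le]⟩
      have m2 : Set.MapsTo (fun u => a+u) (Set.Icc 0 τ) (Set.Icc 0 T) := by
        intro u hu; simp only [Set.mem_Icc] at hu ⊢; exact ⟨by linarith [hu.1, hu.2, hτ0.le], by linarith [hu.1, hu.2, hτ0.le]⟩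
      exact (hFc.comp (by fun_prop) m1).sub (hFc.comp (by fun_prop) m2)
    refine (hcont.intervalIntegrable).congr ?_
    rw [Set.uIoc_of_le hτ0.le]
    intro u hu
    exact (hHrepr a u h1 hu.1.le (by linarith [hu.2])).symm
  -- key per-interval bound
  have key : ∀ a : ℝ, 0 ≤ a → a + 2*τ ≤ T →
      τ * ((s (a+2*τ) - 2 * s (a+τ) + s a) / τ^2)^2
        ≤ (1/τ) * ∫ u in (0:ℝ)..τ, (∫ t in (a+u)..(a+τ+u), (s'' t)^2) := by
    intro a h1 h2
    set g : ℝ → ℝ := fun u => s' (a + τ + u) - s' (a + u) with hg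
    have hgc : ContinuousOn g (Set.uIcc 0 τ) := by
      rw [Set.uIcc_of_le hτ0.le]
      have m1 : Set.MapsTo (fun u => a+τ+u) (Set.Icc 0 τ) (Set.Icc 0 T) := by
        intro u hu; simp only [Set.mem_Icc] at hu ⊢; exact ⟨by linarith [hu.1, hu.2, hτ0.le], by linarith [hu.1, hu.2, hτ0.le]⟩
      have m2 : Set.MapsTo (fun u => a+u) (Set.Icc 0 τ) (Set.Icc 0 T) := by
        intro u hu; simp only [Set.mem_Icc] at hu ⊢; exact ⟨by linarith [hu.1, hu.2, hτ0.le], by linarith [hu.1, hu.2, hτ0.le]⟩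
      exact (hcontS'.comp (by fun_prop) m1).sub (hcontS'.comp (by fun_prop) m2)
    -- D = ∫₀^τ g
    have hD : s (a+2*τ) - 2 * s (a+τ) + s a = ∫ u in (0:ℝ)..τ, g u := by
      have i1 : ∫ u in (0:ℝ)..τ, s' (a + τ + u) = s (a+2*τ) - s (a+τ) := by
        rw [intervalIntegral.integral_comp_add_left s' (a+τ)]
        rw [add_zero]
        have : a + τ + τ = a + 2*τ := by ring
        rw [this]
        exact ftc1 (a+τ) (a+2*τ) (by linarith) (by linarith) (by linarith)
      have i2 : ∫ u in (0:ℝ)..τ, s' (a + u) = s (a+τ) - s a := by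
        rw [intervalIntegral.integral_comp_add_left s' a, add_zero]
        exact ftc1 a (a+τ) h1 (by linarith) (by linarith)
      have m1 : Set.MapsTo (fun u => a+τ+u) (Set.Icc 0 τ) (Set.Icc 0 T) := by
        intro u hu; simp only [Set.mem_Icc] at hu ⊢; exact ⟨by linarith [hu.1, hu.2, hτ0.le], by linarith [hu.1, hu.2, hτ0.le]⟩
      have m2 : Set.MapsTo (fun u => a+u) (Set.Icc 0 τ) (Set.Icc 0 T) := by
        intro u hu; simp only [Set.mem_Icc] at hu ⊢; exact ⟨by linarith [hu.1, hu.2, hτ0.le], by linarith [hu.1, hu.2, hτ0.le]⟩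
      have j1 : IntervalIntegrable (fun u => s' (a+τ+u)) volume 0 τ := by
        refine ContinuousOn.intervalIntegrable ?_
        rw [Set.uIcc_of_le hτ0.le]; exact hcontS'.comp (by fun_prop) m1
      have j2 : IntervalIntegrable (fun u => s' (a+u)) volume 0 τ := by
        refine ContinuousOn.intervalIntegrable ?_
        rw [Set.uIcc_of_le hτ0.le]; exact hcontS'.comp (by fun_prop) m2
      rw [hg]
      rw [intervalIntegral.integral_sub j1 j2, i1, i2]
      ring
    -- pointwise second Cauchy–Schwarz
    have hptw : ∀ u ∈ Set.Icc (0:ℝ) τ,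
        (g u)^2 ≤ τ * ∫ t in (a+u)..(a+τ+u), (s'' t)^2 := by
      intro u hu
      have e1 : (0:ℝ) ≤ a + u := by linarith [hu.1]
      have e2 : a + τ + u ≤ T := by linarith [hu.2]
      have e3 : a + u < a + τ + u := by linarith
      have hgu : g u = ∫ t in (a+u)..(a+τ+u), s'' t := by
        rw [hg, ftc2 (a+u) (a+τ+u) e1 e2 e3.le]
      rw [hgu]
      have := cs_interval (a+u) (a+τ+u) e3 s''
        (hs''i (a+u) (a+τ+u) e1 e2 e3.le) (hsq (a+u) (a+τ+u) e1 e2 e3.le)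
      have hτeq : a + τ + u - (a + u) = τ := by ring
      rwa [hτeq] at this
    -- first Cauchy–Schwarz
    have hg2i : IntervalIntegrable (fun u => (g u)^2) volume 0 τ :=
      ContinuousOn.intervalIntegrable (by exact (hgc.pow 2))
    have cs1 : (∫ u in (0:ℝ)..τ, g u)^2 ≤ τ * ∫ u in (0:ℝ)..τ, (g u)^2 := by
      have := cs_interval 0 τ hτ0 g hgc.intervalIntegrable hg2i
      rwa [sub_zero] at this
    -- integrate pointwise bound
    have hmono : (∫ u in (0:ℝ)..τ, (g u)^2)
        ≤ ∫ u in (0:ℝ)..τ, τ * ∫ t in (a+u)..(a+τ+u), (s'' t)^2 := by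
      refine intervalIntegral.integral_mono_on hτ0.le hg2i
        (((hHint a h1 h2).const_mul τ)) hptw
    rw [intervalIntegral.integral_const_mul] at hmono
    set J := ∫ u in (0:ℝ)..τ, (∫ t in (a+u)..(a+τ+u), (s'' t)^2) with hJ
    have hD2 : (s (a+2*τ) - 2 * s (a+τ) + s a)^2 ≤ τ^2 * J := by
      rw [hD]
      calc (∫ u in (0:ℝ)..τ, g u)^2 ≤ τ * ∫ u in (0:ℝ)..τ, (g u)^2 := cs1
        _ ≤ τ * (τ * J) := by nlinarith [hmono]
        _ = τ^2 * J := by ring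
    have hτ4 : (0:ℝ) < τ^3 := by positivity
    rw [div_pow]
    rw [show τ * ((s (a+2*τ) - 2 * s (a+τ) + s a)^2 / (τ^2)^2)
        = (s (a+2*τ) - 2 * s (a+τ) + s a)^2 / τ^3 by field_simp]
    rw [show (1/τ) * J = (τ^2 * J) / τ^3 by field_simp]
    exact (div_le_div_iff_of_pos_right hτ4).mpr hD2
  -- now sum over k
  set C := ∫ t in (0:ℝ)..T, (s'' t)^2 with hC
  have hstep : ∀ k ∈ Finset.Icc 1 (n-1),
      τ * ((s ((k+1) * τ) - 2 * s (k * τ) + s ((k-1) * τ)) / τ^2)^2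
        ≤ (1/τ) * ∫ u in (0:ℝ)..τ,
            (∫ t in (((k:ℝ)-1)*τ+u)..((k:ℝ)*τ+u), (s'' t)^2) := by
    intro k hk
    rw [Finset.mem_Icc] at hk
    have hk1 : (1:ℝ) ≤ (k:ℝ) := by exact_mod_cast hk.1
    have hkn : (k:ℝ) ≤ (n:ℝ) - 1 := by
      have : (k:ℝ) ≤ ((n-1 : ℕ):ℝ) := by exact_mod_cast hk.2
      rwa [Nat.cast_sub (by omega), Nat.cast_one] at this
    set a : ℝ := ((k:ℝ)-1)*τ with ha
    have h1 : 0 ≤ a := by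
      have : 0 ≤ (k:ℝ) - 1 := by linarith
      exact mul_nonneg this hτ0.le
    have h2 : a + 2*τ ≤ T := by
      rw [ha, hTn]; nlinarith
    have := key a h1 h2
    have e1 : a + 2*τ = ((k:ℝ)+1)*τ := by rw [ha]; ring
    have e2 : a + τ = (k:ℝ)*τ := by rw [ha]; ring
    rw [e1, e2] at this
    convert this using 6 <;> rw [ha] <;> ring
  refine le_trans (Finset.sum_le_sum hstep) ?_
  -- pointwise bound for the sum of the inner integrals
  have hsum_ptw : ∀ u ∈ Set.Icc (0:ℝ) τ,
      (∑ k ∈ Finset.Icc 1 (n-1),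
        ∫ t in (((k:ℝ)-1)*τ+u)..((k:ℝ)*τ+u), (s'' t)^2) ≤ C := by
    intro u hu
    set aseq : ℕ → ℝ := fun j => (j:ℝ)*τ + u with haseq
    have hint' : ∀ j, j < n - 1 → IntervalIntegrable (fun t => (s'' t)^2)
        volume (aseq j) (aseq (j+1)) := by
      intro j hj
      refine hsq _ _ ?_ ?_ ?_
      · have : (0:ℝ) ≤ (j:ℝ)*τ := by positivity
        simp only [haseq]; linarith [hu.1]
      · have hjn : (j:ℝ) + 1 ≤ (n:ℝ) - 1 := by
          have : (j:ℝ) + 1 ≤ ((n-1:ℕ):ℝ) := by exact_mod_cast Nat.succ_le_of_lt hj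
          rwa [Nat.cast_sub (by omega), Nat.cast_one] at this
        simp only [haseq]
        push_cast
        rw [hTn]
        nlinarith [hu.2]
      · simp only [haseq]
        push_cast
        nlinarith [hu.1]
    have htel : ∑ j ∈ Finset.range (n-1),
        (∫ t in (aseq j)..(aseq (j+1)), (s'' t)^2)
        = ∫ t in (aseq 0)..(aseq (n-1)), (s'' t)^2 :=
      intervalIntegral.sum_integral_adjacent_intervals hint'
    have hre : ∑ k ∈ Finset.Icc 1 (n-1),
        (∫ t in (((k:ℝ)-1)*τ+u)..((k:ℝ)*τ+u), (s'' t)^2)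
        = ∑ j ∈ Finset.range (n-1),
          (∫ t in (aseq j)..(aseq (j+1)), (s'' t)^2) := by
      have hIcc : Finset.Icc 1 (n-1) = Finset.Ico 1 n := by
        rw [← Finset.Ico_add_one_right_eq_Icc]; congr 1; omega
      rw [hIcc, Finset.sum_Ico_eq_sum_range]
      refine Finset.sum_congr (by congr 1) ?_
      intro j hj
      have c1 : ((1 + j : ℕ):ℝ) - 1 = (j:ℝ) := by push_cast; ring
      have c2 : ((1 + j : ℕ):ℝ)*τ + u = aseq (j+1) := by
        simp only [haseq]; push_cast; ring
      rw [c2, c1]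
    rw [hre, htel]
    refine intervalIntegral.integral_mono_interval ?_ ?_ ?_ ?_ hint
    · simp only [haseq]; push_cast; simp [hu.1]
    · simp only [haseq]
      have : (0:ℝ) ≤ ((n-1:ℕ):ℝ)*τ := by positivity
      push_cast; linarith
    · simp only [haseq]
      rw [Nat.cast_sub (by omega), Nat.cast_one, hTn]
      nlinarith [hu.2]
    · filter_upwards with t using sq_nonneg _
  -- sum of the right-hand sides
  have hHint' : ∀ k ∈ Finset.Icc 1 (n-1),
      IntervalIntegrable
        (fun u => ∫ t in (((k:ℝ)-1)*τ+u)..((k:ℝ)*τ+u), (s'' t)^2) volume 0 τ := by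
    intro k hk
    rw [Finset.mem_Icc] at hk
    have hk1 : (1:ℝ) ≤ (k:ℝ) := by exact_mod_cast hk.1
    have hkn : (k:ℝ) ≤ (n:ℝ) - 1 := by
      have : (k:ℝ) ≤ ((n-1 : ℕ):ℝ) := by exact_mod_cast hk.2
      rwa [Nat.cast_sub (by omega), Nat.cast_one] at this
    have hh := hHint (((k:ℝ)-1)*τ)
      (by nlinarith) (by rw [hTn]; nlinarith)
    have e : ∀ v:ℝ, ((k:ℝ)-1)*τ + τ + v = (k:ℝ)*τ + v := fun v => by ring
    simpa only [e] using hh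
  have hswap : ∫ u in (0:ℝ)..τ, (∑ k ∈ Finset.Icc 1 (n-1),
        (∫ t in (((k:ℝ)-1)*τ+u)..((k:ℝ)*τ+u), (s'' t)^2))
      = ∑ k ∈ Finset.Icc 1 (n-1), ∫ u in (0:ℝ)..τ,
        (∫ t in (((k:ℝ)-1)*τ+u)..((k:ℝ)*τ+u), (s'' t)^2) :=
    intervalIntegral.integral_finset_sum (f := fun (k:ℕ) (u:ℝ) =>
      ∫ t in (((k:ℝ)-1)*τ+u)..((k:ℝ)*τ+u), (s'' t)^2) hHint'
  have hsumint : IntervalIntegrable (fun u => ∑ k ∈ Finset.Icc 1 (n-1),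
        (∫ t in (((k:ℝ)-1)*τ+u)..((k:ℝ)*τ+u), (s'' t)^2)) volume 0 τ := by
    have h0 := IntervalIntegrable.sum (μ := volume) (a := 0) (b := τ)
      (Finset.Icc 1 (n-1)) (f := fun (k:ℕ) (u:ℝ) =>
        ∫ t in (((k:ℝ)-1)*τ+u)..((k:ℝ)*τ+u), (s'' t)^2) hHint'
    have he : (∑ k ∈ Finset.Icc 1 (n-1), fun (u:ℝ) =>
        ∫ t in (((k:ℝ)-1)*τ+u)..((k:ℝ)*τ+u), (s'' t)^2)
        = fun u => ∑ k ∈ Finset.Icc 1 (n-1),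
            ∫ t in (((k:ℝ)-1)*τ+u)..((k:ℝ)*τ+u), (s'' t)^2 := by
      funext u
      exact Finset.sum_apply u _ _
    rwa [he] at h0
  have hmono2 : (∫ u in (0:ℝ)..τ, (∑ k ∈ Finset.Icc 1 (n-1),
        (∫ t in (((k:ℝ)-1)*τ+u)..((k:ℝ)*τ+u), (s'' t)^2)))
      ≤ ∫ _u in (0:ℝ)..τ, C :=
    intervalIntegral.integral_mono_on hτ0.le hsumint intervalIntegrable_const hsum_ptw
  rw [← Finset.mul_sum, ← hswap]
  rw [intervalIntegral.integral_const] at hmono2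
  simp only [smul_eq_mul, sub_zero] at hmono2
  calc (1/τ) * ∫ u in (0:ℝ)..τ, (∑ k ∈ Finset.Icc 1 (n-1),
        (∫ t in (((k:ℝ)-1)*τ+u)..((k:ℝ)*τ+u), (s'' t)^2))
      ≤ (1/τ) * (τ * C) := by
        refine mul_le_mul_of_nonneg_left hmono2 (by positivity)
    _ = C := by field_simp
end

section
/- Let s ∈ W^{1,2}[0,T] with ∫_0^T (s(t)² + s'(t)²) dt ≤ R². Let n ∈ ℕ, τ = T/n, s_k = s(kτ). Then |∑_{k=0}^{n-1} τ s_k² − ∫_0^T s(t)² dt| ≤ R² τ. -/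
open MeasureTheory intervalIntegral
open Set

/-- For `s ∈ W^{1,2}[0,T]` with `∫_0^T (s² + s'²) ≤ R²`, and `τ = T/n`,
`|∑_{k=0}^{n-1} τ s_k² − ∫_0^T s(t)² dt| ≤ R² τ`. -/
theorem riemann_sum_square_error_bound
    (T : ℝ) (hT : 0 < T) (R : ℝ) (hR : 0 < R)
    (n : ℕ) (hn : 1 ≤ n) (τ : ℝ) (hτ : τ = T / n)
    (s s' : ℝ → ℝ)
    (hs' : ∀ t ∈ Set.Icc (0:ℝ) T, HasDerivAt s (s' t) t)
    (hint : IntervalIntegrable (fun t => (s t)^2 + (s' t)^2) volume 0 T)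
    (hnorm : (∫ t in (0:ℝ)..T, ((s t)^2 + (s' t)^2)) ≤ R^2) :
    |(∑ k ∈ Finset.range n, τ * (s (k * τ))^2) - ∫ t in (0:ℝ)..T, (s t)^2|
      ≤ R^2 * τ := by
  have hnpos : (0:ℝ) < n := by exact_mod_cast hn
  have hτpos : 0 < τ := by rw [hτ]; positivity
  have hnτ : (n:ℝ) * τ = T := by rw [hτ]; field_simp
  set g : ℝ → ℝ := fun t => (s t)^2 + (s' t)^2 with hg
  have hcont : ContinuousOn s (Icc 0 T) := fun t ht =>
    (hs' t ht).continuousAt.continuousWithinAt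
  -- key per-interval lemma
  have key : ∀ a b : ℝ, a ∈ Icc (0:ℝ) T → b ∈ Icc (0:ℝ) T → a ≤ b →
      |(b - a) * (s a)^2 - ∫ t in a..b, (s t)^2| ≤ (b - a) * ∫ t in a..b, g t := by
    intro a b ha hb hab
    have hsub : Icc a b ⊆ Icc (0:ℝ) T := Icc_subset_Icc ha.1 hb.2
    have huicc : uIcc a b ⊆ uIcc (0:ℝ) T := by
      rw [uIcc_of_le hab, uIcc_of_le hT.le]; exact hsub
    have hgab : IntervalIntegrable g volume a b := hint.mono_set huicc
    have hfab : IntervalIntegrable (fun t => (s t)^2) volume a b :=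
      ((hcont.mono (by rwa [uIcc_of_le hab])).pow 2).intervalIntegrable
    -- integrability of the derivative 2 s s'
    have hf'int : ∀ t, t ∈ Icc a b → IntervalIntegrable (fun u => 2 * s u * s' u) volume a t := by
      intro t ht
      have htab : uIcc a t ⊆ Icc (0:ℝ) T := by
        rw [uIcc_of_le ht.1]; exact (Icc_subset_Icc le_rfl ht.2).trans hsub
      rw [intervalIntegrable_iff_integrableOn_Icc_of_le ht.1]
      have hI : Icc a t ⊆ Icc (0:ℝ) T := by rwa [uIcc_of_le ht.1] at htab
      have hgint : IntegrableOn g (Icc a t) volume := by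
        have h2 : IntervalIntegrable g volume a t := by
          refine hint.mono_set ?_
          rw [uIcc_of_le ht.1, uIcc_of_le hT.le]; exact hI
        rwa [intervalIntegrable_iff_integrableOn_Icc_of_le ht.1] at h2
      refine hgint.mono' ?_ ?_
      · -- AEStronglyMeasurable
        have hsm : AEMeasurable s (volume.restrict (Icc a t)) :=
          (hcont.mono hI).aemeasurable measurableSet_Icc
        have hdm : AEMeasurable (deriv s) (volume.restrict (Icc a t)) :=
          (measurable_deriv s).aemeasurable
        have : AEMeasurable (fun u => 2 * s u * deriv s u) (volume.restrict (Icc a t)) :=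
          ((aemeasurable_const.mul hsm).mul hdm)
        refine this.aestronglyMeasurable.congr ?_
        filter_upwards [ae_restrict_mem measurableSet_Icc] with u hu
        have : deriv s u = s' u := (hs' u (hI hu)).deriv
        rw [this]
      · filter_upwards [ae_restrict_mem measurableSet_Icc] with u hu
        have h1 : |2 * s u * s' u| ≤ (s u)^2 + (s' u)^2 := by
          rw [abs_le]; constructor <;> nlinarith [sq_nonneg (s u + s' u), sq_nonneg (s u - s' u)]
        calc ‖2 * s u * s' u‖ = |2 * s u * s' u| := rfl
          _ ≤ g u := h1
    -- FTC on [a, t]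
    have hftc : ∀ t ∈ Icc a b, (s t)^2 - (s a)^2 = ∫ u in a..t, 2 * s u * s' u := by
      intro t ht
      refine (integral_eq_sub_of_hasDerivAt (f := fun x => (s x)^2) (fun u hu => ?_) (hf'int t ht)).symm
      have huT : u ∈ Icc (0:ℝ) T := by
        rw [uIcc_of_le ht.1] at hu
        exact hsub ⟨hu.1, hu.2.trans ht.2⟩
      have := (hs' u huT).fun_pow 2
      simpa [mul_comm, mul_assoc, mul_left_comm] using this
    -- bound |s(t)² − s(a)²| ≤ ∫_a^b g
    have hbound : ∀ t ∈ Icc a b, |(s t)^2 - (s a)^2| ≤ ∫ u in a..b, g u := by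
      intro t ht
      rw [hftc t ht]
      calc |∫ u in a..t, 2 * s u * s' u| ≤ ∫ u in a..t, |2 * s u * s' u| :=
            abs_integral_le_integral_abs ht.1
        _ ≤ ∫ u in a..t, g u := by
            have hgat : IntervalIntegrable g volume a t := by
              refine hgab.mono_set ?_
              rw [uIcc_of_le ht.1, uIcc_of_le hab]
              exact Icc_subset_Icc le_rfl ht.2
            refine integral_mono_on ht.1 ((hf'int t ht).abs) hgat ?_
            intro u _
            show |2 * s u * s' u| ≤ (s u)^2 + (s' u)^2
            rw [abs_le]; constructor <;>
              nlinarith [sq_nonneg (s u + s' u), sq_nonneg (s u - s' u)]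
        _ ≤ ∫ u in a..b, g u := by
            refine integral_mono_interval le_rfl ht.1 ht.2 ?_ hgab
            filter_upwards with u
            show (0:ℝ) ≤ (s u)^2 + (s' u)^2
            positivity
    -- assemble
    have h1 : (b - a) * (s a)^2 - ∫ t in a..b, (s t)^2
        = ∫ t in a..b, ((s a)^2 - (s t)^2) := by
      rw [integral_sub intervalIntegrable_const hfab, intervalIntegral.integral_const, smul_eq_mul]
    rw [h1]
    have hC : ∀ x ∈ Set.uIoc a b, ‖(s a)^2 - (s x)^2‖ ≤ ∫ u in a..b, g u := by
      intro x hx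
      rw [uIoc_of_le hab] at hx
      have hx' : x ∈ Icc a b := ⟨le_of_lt hx.1, hx.2⟩
      rw [Real.norm_eq_abs, abs_sub_comm]
      exact hbound x hx'
    have h2 := norm_integral_le_of_norm_le_const (a := a) (b := b)
      (C := ∫ u in a..b, g u) (f := fun t => (s a)^2 - (s t)^2) hC
    rw [Real.norm_eq_abs] at h2
    calc |∫ t in a..b, ((s a)^2 - (s t)^2)| ≤ |b - a| * ∫ u in a..b, g u := by
          simpa [mul_comm] using h2
      _ = (b - a) * ∫ u in a..b, g u := by rw [abs_of_nonneg (sub_nonneg.mpr hab)]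
  -- grid points
  have hmem : ∀ k : ℕ, k ≤ n → (k:ℝ) * τ ∈ Icc (0:ℝ) T := by
    intro k hk
    constructor
    · positivity
    · rw [← hnτ]
      have : (k:ℝ) ≤ n := by exact_mod_cast hk
      nlinarith
  set a : ℕ → ℝ := fun k => (k:ℝ) * τ with ha
  have hastep : ∀ k : ℕ, a (k+1) - a k = τ := by intro k; simp [ha]; push_cast; ring
  have hale : ∀ k : ℕ, a k ≤ a (k+1) := by
    intro k; have := hastep k; linarith
  have hintf : ∀ k < n, IntervalIntegrable (fun t => (s t)^2) volume (a k) (a (k+1)) := by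
    intro k hk
    refine ((hcont.mono ?_).pow 2).intervalIntegrable
    rw [uIcc_of_le (hale k)]
    exact Icc_subset_Icc (hmem k hk.le).1 (hmem (k+1) hk).2
  have hintg : ∀ k < n, IntervalIntegrable g volume (a k) (a (k+1)) := by
    intro k hk
    refine hint.mono_set ?_
    rw [uIcc_of_le (hale k), uIcc_of_le hT.le]
    exact Icc_subset_Icc (hmem k hk.le).1 (hmem (k+1) hk).2
  have hsumf : ∑ k ∈ Finset.range n, ∫ t in a k..a (k+1), (s t)^2
      = ∫ t in (0:ℝ)..T, (s t)^2 := by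
    rw [sum_integral_adjacent_intervals hintf]
    simp [ha, hnτ]
  have hsumg : ∑ k ∈ Finset.range n, ∫ t in a k..a (k+1), g t
      = ∫ t in (0:ℝ)..T, g t := by
    rw [sum_integral_adjacent_intervals hintg]
    simp [ha, hnτ]
  have hk : ∀ k ∈ Finset.range n,
      |τ * (s (a k))^2 - ∫ t in a k..a (k+1), (s t)^2|
        ≤ τ * ∫ t in a k..a (k+1), g t := by
    intro k hk
    rw [Finset.mem_range] at hk
    have := key (a k) (a (k+1)) (hmem k hk.le) (hmem (k+1) hk) (hale k)
    rwa [show a (k+1) - a k = τ from hastep k] at this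
  calc |(∑ k ∈ Finset.range n, τ * (s (k * τ))^2) - ∫ t in (0:ℝ)..T, (s t)^2|
      = |∑ k ∈ Finset.range n, (τ * (s (a k))^2 - ∫ t in a k..a (k+1), (s t)^2)| := by
        rw [Finset.sum_sub_distrib, hsumf]
    _ ≤ ∑ k ∈ Finset.range n, |τ * (s (a k))^2 - ∫ t in a k..a (k+1), (s t)^2| :=
        Finset.abs_sum_le_sum_abs _ _
    _ ≤ ∑ k ∈ Finset.range n, τ * ∫ t in a k..a (k+1), g t :=
        Finset.sum_le_sum hk
    _ = τ * ∫ t in (0:ℝ)..T, g t := by rw [← Finset.mul_sum, hsumg]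
    _ ≤ τ * R^2 := by
        refine mul_le_mul_of_nonneg_left ?_ hτpos.le
        exact hnorm
    _ = R^2 * τ := by ring
end

section
/- Let s ∈ W^{1,2}[0,T], n ∈ ℕ, τ = T/n, t_k = kτ, s_k = s(t_k), and let Δ = ⋃_{k=1}^n {(x,t) : t_{k−1} < t < t_k, min(s(t), s_k) < x < max(s(t), s_k)}. Then the Lebesgue measure of Δ satisfies |Δ| ≤ (2√T/3) ‖s'‖_{L²[0,T]} τ; in particular |Δ| → 0 as τ → 0. -/
open MeasureTheory intervalIntegral

/-- Cauchy–Schwarz on an interval. -/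
lemma cs_aux {c d : ℝ} (hcd : c ≤ d) {h : ℝ → ℝ}
    (hm : AEStronglyMeasurable h (volume.restrict (Set.Ioc c d)))
    (h2 : MeasureTheory.IntegrableOn (fun x => h x ^ 2) (Set.Ioc c d)) :
    ∫ x in Set.Ioc c d, |h x| ≤ Real.sqrt (d - c) * Real.sqrt (∫ x in Set.Ioc c d, h x ^ 2) := by
  set μ := volume.restrict (Set.Ioc c d) with hμ
  haveI : IsFiniteMeasure μ := by
    constructor
    rw [hμ, Measure.restrict_apply_univ, Real.volume_Ioc]
    exact ENNReal.ofReal_lt_top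
  have hpq : Real.HolderConjugate 2 2 := Real.holderConjugate_iff.mpr ⟨by norm_num, by norm_num⟩
  have h2' : ENNReal.ofReal (2:ℝ) = 2 := by norm_num
  have hf : MemLp (fun x => |h x|) (ENNReal.ofReal (2:ℝ)) μ := by
    rw [h2']
    exact (memLp_two_iff_integrable_sq (hm.norm.congr (Filter.Eventually.of_forall fun x => Real.norm_eq_abs (h x)))).mpr (by simp only [sq_abs]; exact h2)
  have hg : MemLp (fun _ : ℝ => (1:ℝ)) (ENNReal.ofReal (2:ℝ)) μ := by
    rw [h2']; exact memLp_const 1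
  have key := integral_mul_le_Lp_mul_Lq_of_nonneg hpq
    (Filter.Eventually.of_forall fun x => abs_nonneg (h x))
    (Filter.Eventually.of_forall fun _ => zero_le_one) hf hg
  simp only [mul_one, Real.one_rpow] at key
  have e1 : ∫ a, |h a| ^ (2:ℝ) ∂μ = ∫ x in Set.Ioc c d, h x ^ 2 := by
    rw [hμ]
    refine setIntegral_congr_fun measurableSet_Ioc fun x _ => ?_
    rw [show (2:ℝ) = ((2:ℕ):ℝ) by norm_num, Real.rpow_natCast, sq_abs]
  have e2 : ∫ _a, (1:ℝ) ∂μ = d - c := by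
    rw [MeasureTheory.integral_const, smul_eq_mul, mul_one, hμ, measureReal_def, Measure.restrict_apply_univ,
      Real.volume_Ioc, ENNReal.toReal_ofReal (by linarith)]
  rw [e1, e2] at key
  calc ∫ x in Set.Ioc c d, |h x| = ∫ a, |h a| ∂μ := by rw [hμ]
    _ ≤ (∫ x in Set.Ioc c d, h x ^ 2) ^ ((1:ℝ)/2) * (d - c) ^ ((1:ℝ)/2) := key
    _ = Real.sqrt (d - c) * Real.sqrt (∫ x in Set.Ioc c d, h x ^ 2) := by
        rw [← Real.sqrt_eq_rpow, ← Real.sqrt_eq_rpow, mul_comm]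


lemma sqrt_integral_aux {c d : ℝ} (hcd : c ≤ d) :
    ∫ t in c..d, Real.sqrt (d - t) = (2/3) * ((d - c) * Real.sqrt (d - c)) := by
  have hderiv : ∀ t ∈ Set.uIcc c d,
      HasDerivAt (fun t => -(2/3) * (d - t) ^ ((3:ℝ)/2)) (Real.sqrt (d - t)) t := by
    intro t ht
    have h1 : HasDerivAt (fun t : ℝ => d - t) (-1) t := (hasDerivAt_id t).const_sub d
    have h2 : HasDerivAt (fun y : ℝ => y ^ ((3:ℝ)/2))
        ((3/2) * (d - t) ^ ((3:ℝ)/2 - 1)) (d - t) :=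
      Real.hasDerivAt_rpow_const (Or.inr (by norm_num))
    have h3 := (h2.comp t h1).const_mul (-(2/3) : ℝ)
    refine h3.congr_deriv ?_
    rw [show (3:ℝ)/2 - 1 = 1/2 by norm_num, Real.sqrt_eq_rpow]
    ring
  have hint : IntervalIntegrable (fun t => Real.sqrt (d - t)) volume c d :=
    (Real.continuous_sqrt.comp (continuous_const.sub continuous_id)).intervalIntegrable c d
  rw [integral_eq_sub_of_hasDerivAt hderiv hint]
  rw [sub_self, Real.zero_rpow (by norm_num)]
  have : (d - c) ^ ((3:ℝ)/2) = (d - c) * Real.sqrt (d - c) := by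
    rw [show (3:ℝ)/2 = 1 + 1/2 by norm_num, Real.rpow_add' (by linarith) (by norm_num),
      Real.rpow_one, Real.sqrt_eq_rpow]
  rw [this]; ring

lemma strip_volume {c d : ℝ} (hcd : c ≤ d) {u : ℝ → ℝ} (hu : Continuous u) :
    volume {p : ℝ × ℝ | c < p.2 ∧ p.2 < d ∧ min (u p.2) (u d) < p.1 ∧ p.1 < max (u p.2) (u d)}
      = ENNReal.ofReal (∫ t in Set.Ioo c d, |u t - u d|) := by
  set f : ℝ → ℝ := fun t => min (u t) (u d) with hf
  set g : ℝ → ℝ := fun t => max (u t) (u d) with hg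
  have hfc : Continuous f := hu.min continuous_const
  have hgc : Continuous g := hu.max continuous_const
  have hset : {p : ℝ × ℝ | c < p.2 ∧ p.2 < d ∧ min (u p.2) (u d) < p.1 ∧ p.1 < max (u p.2) (u d)}
      = Prod.swap ⁻¹' regionBetween f g (Set.Ioo c d) := by
    ext ⟨x, t⟩
    simp only [Set.mem_setOf_eq, Set.mem_preimage, Prod.swap_prod_mk, regionBetween,
      Set.mem_Ioo, hf, hg]
    tauto
  have hmeasR : MeasurableSet (regionBetween f g (Set.Ioo c d)) :=
    measurableSet_regionBetween hfc.measurable hgc.measurable measurableSet_Ioo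
  have hswap : volume (Prod.swap ⁻¹' regionBetween f g (Set.Ioo c d))
      = (volume.prod volume) (regionBetween f g (Set.Ioo c d)) := by
    rw [MeasureTheory.Measure.volume_eq_prod]
    exact Measure.measurePreserving_swap.measure_preimage
      hmeasR.nullMeasurableSet
  rw [hset, hswap,
    volume_regionBetween_eq_integral
      ((hfc.integrableOn_Icc).mono_set Set.Ioo_subset_Icc_self)
      ((hgc.integrableOn_Icc).mono_set Set.Ioo_subset_Icc_self)
      measurableSet_Ioo (fun x _ => min_le_max)]
  congr 1
  refine setIntegral_congr_fun measurableSet_Ioo fun t _ => ?_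
  simp only [Pi.sub_apply, hf, hg]
  rw [max_sub_min_eq_abs', abs_sub_comm]


/-- for `s ∈ W^{1,2}[0,T]` and the set `Δ` between the curve `x = s(t)`
and its grid sampling `x = s_k` on each strip `t_{k−1} < t < t_k`, the Lebesgue measure
satisfies `|Δ| ≤ (2√T/3)‖s'‖_{L²[0,T]} τ`. -/
theorem measure_between_curve_and_sampling
    (T : ℝ) (hT : 0 < T) (n : ℕ) (hn : 1 ≤ n) (τ : ℝ) (hτ : τ = T / n)
    (s s' : ℝ → ℝ)
    (hs' : ∀ t ∈ Set.Icc (0:ℝ) T, HasDerivAt s (s' t) t)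
    (hint : IntervalIntegrable (fun t => (s' t)^2) volume 0 T)
    (Δ : Set (ℝ × ℝ))
    (hΔ : Δ = ⋃ k ∈ Finset.Icc 1 n,
        {p : ℝ × ℝ | (k-1) * τ < p.2 ∧ p.2 < k * τ ∧
          min (s p.2) (s (k * τ)) < p.1 ∧ p.1 < max (s p.2) (s (k * τ))}) :
    (volume Δ).toReal
      ≤ (2 * Real.sqrt T / 3) * Real.sqrt (∫ t in (0:ℝ)..T, (s' t)^2) * τ := by
  have hn0 : (0:ℝ) < (n:ℝ) := by exact_mod_cast Nat.pos_of_ne_zero (by omega)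
  have hτpos : 0 < τ := by rw [hτ]; positivity
  have hnτ : (n:ℝ) * τ = T := by rw [hτ]; field_simp
  -- continuity of s on [0,T]
  have hcont : ContinuousOn s (Set.Icc 0 T) := fun t ht =>
    ((hs' t ht).continuousAt).continuousWithinAt
  -- clamped version of s
  set sc : ℝ → ℝ := fun t => s (min T (max 0 t)) with hsc
  have hscc : Continuous sc := by
    apply hcont.comp_continuous
      (continuous_const.min (continuous_const.max continuous_id))
    intro x
    exact ⟨le_min hT.le (le_max_left _ _), min_le_left _ _⟩
  have hsceq : ∀ t ∈ Set.Icc (0:ℝ) T, sc t = s t := by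
    intro t ht
    simp only [hsc]
    rw [max_eq_right ht.1, min_eq_right ht.2]
  -- measurability of s' on subsets of [0,T]
  have hs'deriv : ∀ t ∈ Set.Icc (0:ℝ) T, deriv s t = s' t := fun t ht => (hs' t ht).deriv
  have hmeas : ∀ u : Set ℝ, u ⊆ Set.Icc 0 T → MeasurableSet u →
      AEStronglyMeasurable s' (volume.restrict u) := fun u hu hmu =>
    (measurable_deriv s).aestronglyMeasurable.congr
      ((ae_restrict_mem hmu).mono fun x hx => hs'deriv x (hu hx))
  -- integrability of s' on [0,T]
  have hint1 : IntervalIntegrable s' volume 0 T := by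
    have hg : IntervalIntegrable (fun t => (s' t)^2 + 1) volume 0 T :=
      hint.add intervalIntegrable_const
    refine hg.mono_fun ?_ ?_
    · exact hmeas _ (by rw [Set.uIoc_of_le hT.le]; exact Set.Ioc_subset_Icc_self)
        measurableSet_uIoc
    · refine Filter.Eventually.of_forall fun x => ?_
      simp only [Real.norm_eq_abs]
      have h1 : |s' x| ≤ (s' x)^2 + 1 := by nlinarith [sq_nonneg (|s' x| - 1), sq_abs (s' x)]
      have h2 : (0:ℝ) ≤ (s' x)^2 + 1 := by positivity
      rw [abs_of_nonneg h2]; exact h1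
  -- FTC
  have hftc : ∀ c d : ℝ, 0 ≤ c → c ≤ d → d ≤ T → s d - s c = ∫ x in c..d, s' x := by
    intro c d h0 hcd hdT
    refine (integral_eq_sub_of_hasDerivAt (fun t ht => hs' t ?_) (hint1.mono_set ?_)).symm
    · rw [Set.uIcc_of_le hcd] at ht
      exact ⟨le_trans h0 ht.1, ht.2.trans hdT⟩
    · rw [Set.uIcc_of_le hcd, Set.uIcc_of_le hT.le]
      exact Set.Icc_subset_Icc h0 hdT
  set I : ℕ → ℝ := fun k => ∫ t in (((k:ℝ)-1)*τ)..((k:ℝ)*τ), (s' t)^2 with hI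
  -- per-strip facts
  have key : ∀ k ∈ Finset.Icc 1 n,
      volume {p : ℝ × ℝ | ((k:ℝ)-1) * τ < p.2 ∧ p.2 < (k:ℝ) * τ ∧
          min (s p.2) (s ((k:ℝ) * τ)) < p.1 ∧ p.1 < max (s p.2) (s ((k:ℝ) * τ))}
        ≤ ENNReal.ofReal ((2/3) * (τ * Real.sqrt τ) * Real.sqrt (I k)) := by
    intro k hk
    rw [Finset.mem_Icc] at hk
    set a : ℝ := ((k:ℝ)-1)*τ with ha
    set b : ℝ := (k:ℝ)*τ with hb
    have hk1 : (1:ℝ) ≤ (k:ℝ) := by exact_mod_cast hk.1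
    have hkn : (k:ℝ) ≤ (n:ℝ) := by exact_mod_cast hk.2
    have h0a : 0 ≤ a := by rw [ha]; nlinarith
    have hab : a ≤ b := by rw [ha, hb]; nlinarith
    have hbT : b ≤ T := by rw [hb, ← hnτ]; nlinarith
    have h0T : (0:ℝ) ≤ b ∧ b ≤ T := ⟨le_trans h0a hab, hbT⟩
    have hba : b - a = τ := by rw [ha, hb]; ring
    have hIint : IntervalIntegrable (fun t => (s' t)^2) volume a b := by
      refine hint.mono_set ?_
      rw [Set.uIcc_of_le hab, Set.uIcc_of_le hT.le]
      exact Set.Icc_subset_Icc h0a hbT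
    have hIOn : IntegrableOn (fun t => (s' t)^2) (Set.Ioc a b) volume :=
      (intervalIntegrable_iff_integrableOn_Ioc_of_le hab).1 hIint
    have hI0 : 0 ≤ I k := by
      rw [hI]
      exact intervalIntegral.integral_nonneg hab fun t _ => sq_nonneg _
    -- pointwise bound
    have hpt : ∀ t ∈ Set.Icc a b, |s t - s b| ≤ Real.sqrt (b - t) * Real.sqrt (I k) := by
      intro t ht
      have h0t : 0 ≤ t := le_trans h0a ht.1
      have htb : t ≤ b := ht.2
      have e1 : |s t - s b| = |∫ x in t..b, s' x| := by
        rw [abs_sub_comm, hftc t b h0t htb hbT]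
      have e2 : |∫ x in t..b, s' x| ≤ ∫ x in Set.Ioc t b, |s' x| := by
        rw [← integral_of_le htb]
        exact abs_integral_le_integral_abs htb
      have hsub : Set.Ioc t b ⊆ Set.Icc 0 T := fun x hx =>
        ⟨le_trans h0t hx.1.le, hx.2.trans hbT⟩
      have e3 := cs_aux htb (hmeas _ hsub measurableSet_Ioc)
        (hIOn.mono_set (Set.Ioc_subset_Ioc_left ht.1))
      have hIk : I k = ∫ t in a..b, (s' t)^2 := rfl
      have e4 : ∫ x in Set.Ioc t b, (s' x)^2 ≤ I k := by
        rw [hIk, integral_of_le hab]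
        exact setIntegral_mono_set hIOn
          (Filter.Eventually.of_forall fun x => sq_nonneg _)
          (Filter.Eventually.of_forall fun x hx => Set.Ioc_subset_Ioc_left ht.1 hx)
      calc |s t - s b| ≤ ∫ x in Set.Ioc t b, |s' x| := e1 ▸ e2
        _ ≤ Real.sqrt (b - t) * Real.sqrt (∫ x in Set.Ioc t b, (s' x)^2) := e3
        _ ≤ Real.sqrt (b - t) * Real.sqrt (I k) := by
            exact mul_le_mul_of_nonneg_left (Real.sqrt_le_sqrt e4) (Real.sqrt_nonneg _)
    -- set equality to the clamped version
    have hEeq : {p : ℝ × ℝ | ((k:ℝ)-1) * τ < p.2 ∧ p.2 < (k:ℝ) * τ ∧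
          min (s p.2) (s ((k:ℝ) * τ)) < p.1 ∧ p.1 < max (s p.2) (s ((k:ℝ) * τ))}
        = {p : ℝ × ℝ | a < p.2 ∧ p.2 < b ∧
          min (sc p.2) (sc b) < p.1 ∧ p.1 < max (sc p.2) (sc b)} := by
      ext ⟨x, t⟩
      simp only [Set.mem_setOf_eq, ← ha, ← hb]
      constructor
      · rintro ⟨h1, h2, h3, h4⟩
        have ht : t ∈ Set.Icc (0:ℝ) T := ⟨le_trans h0a h1.le, h2.le.trans hbT⟩
        rw [hsceq t ht, hsceq b ⟨h0T.1, h0T.2⟩]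
        exact ⟨h1, h2, h3, h4⟩
      · rintro ⟨h1, h2, h3, h4⟩
        have ht : t ∈ Set.Icc (0:ℝ) T := ⟨le_trans h0a h1.le, h2.le.trans hbT⟩
        rw [hsceq t ht, hsceq b ⟨h0T.1, h0T.2⟩] at h3 h4
        exact ⟨h1, h2, h3, h4⟩
    rw [hEeq, strip_volume hab hscc]
    apply ENNReal.ofReal_le_ofReal
    -- bound the integral
    have hm1 : ∫ t in Set.Ioo a b, |sc t - sc b|
        ≤ ∫ t in Set.Ioo a b, Real.sqrt (b - t) * Real.sqrt (I k) := by
      refine setIntegral_mono_on ?_ ?_ measurableSet_Ioo ?_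
      · exact ((hscc.sub continuous_const).abs).integrableOn_Icc.mono_set
          Set.Ioo_subset_Icc_self
      · exact (((Real.continuous_sqrt.comp (continuous_const.sub continuous_id)).mul
          continuous_const)).integrableOn_Icc.mono_set Set.Ioo_subset_Icc_self
      · intro t ht
        have ht' : t ∈ Set.Icc a b := Set.Ioo_subset_Icc_self ht
        have htI : t ∈ Set.Icc (0:ℝ) T := ⟨le_trans h0a ht'.1, ht'.2.trans hbT⟩
        rw [hsceq t htI, hsceq b ⟨h0T.1, h0T.2⟩]
        exact hpt t ht'
    have hm2 : ∫ t in Set.Ioo a b, Real.sqrt (b - t) * Real.sqrt (I k)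
        = (2/3) * (τ * Real.sqrt τ) * Real.sqrt (I k) := by
      rw [MeasureTheory.integral_mul_const, ← MeasureTheory.integral_Ioc_eq_integral_Ioo,
        ← integral_of_le hab, sqrt_integral_aux hab, hba]
    exact hm1.trans_eq hm2
  -- summation
  set B : ℕ → ℝ := fun k => (2/3) * (τ * Real.sqrt τ) * Real.sqrt (I k) with hB
  have hB0 : ∀ k, 0 ≤ B k := fun k => by rw [hB]; positivity
  have hvolsum : volume Δ ≤ ENNReal.ofReal (∑ k ∈ Finset.Icc 1 n, B k) := by
    rw [hΔ]
    refine (measure_biUnion_finset_le _ _).trans ?_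
    calc ∑ k ∈ Finset.Icc 1 n, volume {p : ℝ × ℝ | ((k:ℝ)-1) * τ < p.2 ∧ p.2 < (k:ℝ) * τ ∧
          min (s p.2) (s ((k:ℝ) * τ)) < p.1 ∧ p.1 < max (s p.2) (s ((k:ℝ) * τ))}
        ≤ ∑ k ∈ Finset.Icc 1 n, ENNReal.ofReal (B k) := Finset.sum_le_sum fun k hk => key k hk
      _ = ENNReal.ofReal (∑ k ∈ Finset.Icc 1 n, B k) :=
          (ENNReal.ofReal_sum_of_nonneg (fun k _ => hB0 k)).symm
  -- the sum of I k
  have hIk0 : ∀ k ∈ Finset.Icc 1 n, 0 ≤ I k := by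
    intro k hk
    rw [Finset.mem_Icc] at hk
    have hk1 : (1:ℝ) ≤ (k:ℝ) := by exact_mod_cast hk.1
    exact intervalIntegral.integral_nonneg (by nlinarith) fun t _ => sq_nonneg _
  have hsumI : ∑ k ∈ Finset.Icc 1 n, I k = ∫ t in (0:ℝ)..T, (s' t)^2 := by
    have hadjOK : ∀ i, i < n → IntervalIntegrable (fun t => (s' t)^2) volume
        ((i:ℝ) * τ) (((i:ℝ)+1) * τ) := by
      intro i hi
      refine hint.mono_set ?_
      have h1 : (0:ℝ) ≤ (i:ℝ) * τ := by positivity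
      have h2 : ((i:ℝ)+1) * τ ≤ T := by
        rw [← hnτ]
        have : ((i:ℝ)+1) ≤ (n:ℝ) := by exact_mod_cast Nat.succ_le_of_lt hi
        nlinarith
      rw [Set.uIcc_of_le (by nlinarith), Set.uIcc_of_le hT.le]
      exact Set.Icc_subset_Icc h1 h2
    have hA := intervalIntegral.sum_integral_adjacent_intervals
      (a := fun i : ℕ => (i:ℝ) * τ) (f := fun t => (s' t)^2) (μ := volume) (n := n)
      (fun i hi => by push_cast; exact hadjOK i hi)
    have hIdx : ∀ i : ℕ, I (1+i) = ∫ x in ((i:ℝ)*τ)..(((i:ℝ)+1)*τ), (s' x)^2 := by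
      intro i
      have h1 : (((1+i:ℕ)):ℝ) - 1 = (i:ℝ) := by push_cast; ring
      have h2 : (((1+i:ℕ)):ℝ) = (i:ℝ) + 1 := by push_cast; ring
      show (∫ t in ((((1+i:ℕ)):ℝ)-1)*τ..(((1+i:ℕ)):ℝ)*τ, (s' t)^2) = _
      rw [h1, h2]
    simp only [Nat.cast_add, Nat.cast_one, Nat.cast_zero, zero_mul] at hA
    calc ∑ k ∈ Finset.Icc 1 n, I k
        = ∑ i ∈ Finset.range n, I (1+i) := by
          rw [← Finset.Ico_add_one_right_eq_Icc, Finset.sum_Ico_eq_sum_range,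
            Nat.add_sub_cancel]
      _ = ∑ i ∈ Finset.range n, ∫ x in ((i:ℝ)*τ)..(((i:ℝ)+1)*τ), (s' x)^2 :=
          Finset.sum_congr rfl fun i _ => hIdx i
      _ = ∫ t in (0:ℝ)..T, (s' t)^2 := by
          rw [hA]
          norm_num [hnτ]
  -- Cauchy–Schwarz for the sum
  have hcard : (Finset.Icc 1 n).card = n := by
    rw [Nat.card_Icc]
    omega
  have hCS : ∑ k ∈ Finset.Icc 1 n, Real.sqrt (I k)
      ≤ Real.sqrt n * Real.sqrt (∫ t in (0:ℝ)..T, (s' t)^2) := by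
    have h1 : (∑ k ∈ Finset.Icc 1 n, Real.sqrt (I k))^2
        ≤ (n:ℝ) * ∑ k ∈ Finset.Icc 1 n, I k := by
      have h2 := sq_sum_le_card_mul_sum_sq (s := Finset.Icc 1 n)
        (f := fun k => Real.sqrt (I k))
      rw [hcard] at h2
      refine h2.trans_eq ?_
      congr 1
      exact Finset.sum_congr rfl fun k hk => Real.sq_sqrt (hIk0 k hk)
    have h3 : 0 ≤ ∑ k ∈ Finset.Icc 1 n, Real.sqrt (I k) :=
      Finset.sum_nonneg fun k _ => Real.sqrt_nonneg _
    calc ∑ k ∈ Finset.Icc 1 n, Real.sqrt (I k)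
        = Real.sqrt ((∑ k ∈ Finset.Icc 1 n, Real.sqrt (I k))^2) := (Real.sqrt_sq h3).symm
      _ ≤ Real.sqrt ((n:ℝ) * ∑ k ∈ Finset.Icc 1 n, I k) := Real.sqrt_le_sqrt h1
      _ = Real.sqrt n * Real.sqrt (∫ t in (0:ℝ)..T, (s' t)^2) := by
          rw [Real.sqrt_mul (by positivity), hsumI]
  -- final bound on the sum
  have hsum : ∑ k ∈ Finset.Icc 1 n, B k
      ≤ (2 * Real.sqrt T / 3) * Real.sqrt (∫ t in (0:ℝ)..T, (s' t)^2) * τ := by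
    have hTs : Real.sqrt τ * Real.sqrt n = Real.sqrt T := by
      rw [← Real.sqrt_mul hτpos.le]
      congr 1
      rw [mul_comm] at hnτ
      exact hnτ
    have e1 : ∑ k ∈ Finset.Icc 1 n, B k
        = (2/3) * (τ * Real.sqrt τ) * ∑ k ∈ Finset.Icc 1 n, Real.sqrt (I k) := by
      rw [hB, Finset.mul_sum]
    rw [e1]
    have e2 : (2/3) * (τ * Real.sqrt τ)
        * (Real.sqrt n * Real.sqrt (∫ t in (0:ℝ)..T, (s' t)^2))
        = (2 * Real.sqrt T / 3) * Real.sqrt (∫ t in (0:ℝ)..T, (s' t)^2) * τ := by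
      rw [← hTs]
      ring
    calc (2/3) * (τ * Real.sqrt τ) * ∑ k ∈ Finset.Icc 1 n, Real.sqrt (I k)
        ≤ (2/3) * (τ * Real.sqrt τ)
            * (Real.sqrt n * Real.sqrt (∫ t in (0:ℝ)..T, (s' t)^2)) := by
          exact mul_le_mul_of_nonneg_left hCS (by positivity)
      _ = _ := e2
  -- conclude
  calc (volume Δ).toReal
      ≤ (ENNReal.ofReal (∑ k ∈ Finset.Icc 1 n, B k)).toReal :=
        ENNReal.toReal_mono ENNReal.ofReal_ne_top hvolsum
    _ = ∑ k ∈ Finset.Icc 1 n, B k :=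
        ENNReal.toReal_ofReal (Finset.sum_nonneg fun k _ => hB0 k)
    _ ≤ _ := hsum
end
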